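/- Let A < B be real numbers and let ν : ℝ → ℝ be a differentiable probability density supported on [A, B], i.e. ν is nonnegative, ν(x) = 0 for x ∉ [A, B], and ∫_A^B ν(x) dx = 1. Then for every ε > 0 there exist a positive integer k, parameters α_i > 0 with Σ_{i=1}^k α_i = 1, μ_i ∈ ℝ, s_i > 0 defining the logistic mixture cdf F(x) = Σ_{i=1}^k α_i · sigmoid((x − μ_i)/s_i), and bounds A* < B* such that sup_{x ∈ [A, B]} | F′(x) / (F(B*) − F(A*)) − ν(x) | < ε, where F′(x) = Σ_{i=1}^k (α_i/s_i) · sigmoid′((x − μ_i)/s_i). -/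

import Mathlib

open Finset Set

noncomputable def sigmoid (t : ℝ) : ℝ := 1 / (1 + Real.exp (-t))

noncomputable def gexp (t : ℝ) : ℝ := Real.exp (-t) / (1 + Real.exp (-t))^2

lemma one_add_exp_pos (t : ℝ) : 0 < 1 + Real.exp (-t) := by positivity

lemma sigmoid_hasDerivAt (t : ℝ) : HasDerivAt sigmoid (gexp t) t := by
  have h1 : HasDerivAt (fun t : ℝ => 1 + Real.exp (-t)) (-Real.exp (-t)) t := by
    simpa using ((Real.hasDerivAt_exp (-t)).comp t ((hasDerivAt_id t).neg)).const_add 1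
  have h2 := h1.inv (ne_of_gt (one_add_exp_pos t))
  have : HasDerivAt (fun t : ℝ => (1 + Real.exp (-t))⁻¹)
      (Real.exp (-t) / (1 + Real.exp (-t))^2) t := by
    refine h2.congr_deriv ?_
    ring
  have hs : sigmoid = fun t : ℝ => (1 + Real.exp (-t))⁻¹ := by
    funext u; simp [sigmoid, one_div]
  rw [hs, gexp]
  exact this

lemma deriv_sigmoid : deriv sigmoid = gexp := by
  funext t; exact (sigmoid_hasDerivAt t).deriv

lemma gexp_pos (t : ℝ) : 0 < gexp t := by
  unfold gexp; positivity

lemma gexp_le_quarter (t : ℝ) : gexp t ≤ 1/4 := by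
  unfold gexp
  rw [div_le_div_iff₀ (by positivity) (by norm_num)]
  nlinarith [sq_nonneg (1 - Real.exp (-t)), Real.exp_pos (-t)]

lemma gexp_neg (t : ℝ) : gexp (-t) = gexp t := by
  unfold gexp
  have h := Real.exp_pos (-t)
  rw [neg_neg, show Real.exp t = (Real.exp (-t))⁻¹ from by rw [← Real.exp_neg, neg_neg]]
  field_simp
  ring

lemma gexp_le_exp_neg (t : ℝ) : gexp t ≤ Real.exp (-t) := by
  unfold gexp
  rw [div_le_iff₀ (by positivity)]
  nlinarith [Real.exp_pos (-t), sq_nonneg (Real.exp (-t))]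

lemma gexp_le_exp_neg_abs (t : ℝ) : gexp t ≤ Real.exp (-|t|) := by
  rcases abs_cases t with ⟨h, _⟩ | ⟨h, _⟩
  · rw [h]; exact gexp_le_exp_neg t
  · rw [h]; rw [← gexp_neg]; simpa using gexp_le_exp_neg (-t)

lemma gexp_continuous : Continuous gexp := by
  unfold gexp
  fun_prop (disch := intro x; positivity)

lemma sigmoid_pos (t : ℝ) : 0 < sigmoid t := by unfold sigmoid; positivity

lemma sigmoid_lt_one (t : ℝ) : sigmoid t < 1 := by
  unfold sigmoid
  rw [div_lt_one (one_add_exp_pos t)]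
  linarith [Real.exp_pos (-t)]

lemma one_sub_sigmoid_le (t : ℝ) : 1 - sigmoid t ≤ Real.exp (-t) := by
  unfold sigmoid
  have h := one_add_exp_pos t
  have e : 1 - 1 / (1 + Real.exp (-t)) = Real.exp (-t) / (1 + Real.exp (-t)) := by
    field_simp
    ring
  rw [e, div_le_iff₀ h]
  nlinarith [Real.exp_pos (-t)]

lemma sigmoid_le_exp (t : ℝ) : sigmoid t ≤ Real.exp t := by
  unfold sigmoid
  rw [div_le_iff₀ (one_add_exp_pos t)]
  have : Real.exp t * Real.exp (-t) = 1 := by rw [← Real.exp_add]; simp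
  nlinarith [Real.exp_pos t, Real.exp_pos (-t)]

lemma gexp_hasDerivAt (t : ℝ) :
    HasDerivAt gexp (-gexp t + 2 * (Real.exp (-t))^2 / (1 + Real.exp (-t))^3) t := by
  have hE : HasDerivAt (fun t : ℝ => Real.exp (-t)) (-Real.exp (-t)) t := by
    simpa using (hasDerivAt_neg t).exp
  have hden : HasDerivAt (fun t : ℝ => (1 + Real.exp (-t))^2) (2 * (1 + Real.exp (-t)) * (-Real.exp (-t))) t := by
    have := (hE.const_add 1).fun_pow 2
    simpa [mul_comm] using this
  have h := hE.div hden (by positivity)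
  have hne : (1 + Real.exp (-t)) ≠ 0 := ne_of_gt (one_add_exp_pos t)
  refine h.congr_deriv ?_
  unfold gexp
  field_simp
  ring

lemma gexp_lipschitz (a b : ℝ) : |gexp a - gexp b| ≤ |a - b| := by
  have hd : ∀ t : ℝ, ‖deriv gexp t‖ ≤ (1 : ℝ) := by
    intro t
    rw [(gexp_hasDerivAt t).deriv]
    have h1 : gexp t ≤ 1/4 := gexp_le_quarter t
    have h2 : 0 < gexp t := gexp_pos t
    have h3 : 2 * (Real.exp (-t))^2 / (1 + Real.exp (-t))^3 ≤ 2 * gexp t := by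
      unfold gexp
      rw [mul_div_assoc', div_le_div_iff₀ (by positivity) (by positivity)]
      have hE := Real.exp_pos (-t)
      nlinarith [mul_pos hE (mul_pos (one_add_exp_pos t) (mul_pos (one_add_exp_pos t) (one_add_exp_pos t)))]
    have h4 : 0 < 2 * (Real.exp (-t))^2 / (1 + Real.exp (-t))^3 := by positivity
    rw [Real.norm_eq_abs]
    rw [abs_le]
    constructor <;> nlinarith
  have hl : LipschitzWith 1 gexp :=
    lipschitzWith_of_nnnorm_deriv_le (fun t => (gexp_hasDerivAt t).differentiableAt)
      (fun t => by rw [← NNReal.coe_le_coe, coe_nnnorm, NNReal.coe_one]; exact hd t)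
  have := hl.dist_le_mul a b
  simpa [Real.dist_eq] using this

lemma exp_neg_le_two_div_sq {u : ℝ} (hu : 0 < u) : Real.exp (-u) ≤ 2 / u^2 := by
  rw [Real.exp_neg, le_div_iff₀ (by positivity), inv_mul_le_iff₀ (Real.exp_pos u)]
  nlinarith [Real.add_one_le_exp u, Real.quadratic_le_exp_of_nonneg hu.le, sq_nonneg u]

lemma sigmoid_mono {a b : ℝ} (hab : a ≤ b) : sigmoid a ≤ sigmoid b := by
  unfold sigmoid
  rw [div_le_div_iff₀ (one_add_exp_pos a) (one_add_exp_pos b)]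
  have := Real.exp_le_exp.mpr (neg_le_neg hab)
  linarith

lemma kernel_hasDerivAt (s x : ℝ) (hs : 0 < s) (y : ℝ) :
    HasDerivAt (fun y : ℝ => -sigmoid ((x - y)/s)) (1/s * gexp ((x - y)/s)) y := by
  have hinner : HasDerivAt (fun y : ℝ => (x - y)/s) (-(1/s)) y := by
    have : HasDerivAt (fun y : ℝ => x - y) (-1) y := by
      exact (hasDerivAt_id' y).const_sub x
    simpa [neg_div] using this.div_const s
  have := ((sigmoid_hasDerivAt ((x - y)/s)).comp y hinner).neg
  refine this.congr_deriv ?_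
  ring

lemma kernel_integral (s x a b : ℝ) (hs : 0 < s) :
    ∫ y in a..b, 1/s * gexp ((x - y)/s) = sigmoid ((x - a)/s) - sigmoid ((x - b)/s) := by
  have hcont : Continuous (fun y : ℝ => 1/s * gexp ((x - y)/s)) := by
    exact continuous_const.mul (gexp_continuous.comp ((continuous_const.sub continuous_id).div_const s))
  have := intervalIntegral.integral_eq_sub_of_hasDerivAt
    (f := fun y : ℝ => -sigmoid ((x - y)/s))
    (fun y _ => kernel_hasDerivAt s x hs y) (hcont.intervalIntegrable a b)
  rw [this]; ring

lemma riemann_sum_err (f : ℝ → ℝ) (hf : Continuous f) (A h : ℝ) (hh : 0 < h) (n : ℕ) (c : ℝ)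
    (hc : ∀ i ∈ Finset.range n, ∀ y ∈ Set.Icc (A + i*h) (A + i*h + h),
      |f y - f (A + i*h + h/2)| ≤ c) :
    |(∑ i ∈ Finset.range n, f (A + i*h + h/2) * h) - ∫ y in A..(A + n*h), f y| ≤ n * (h * c) := by
  set a : ℕ → ℝ := fun k => A + k*h with ha
  have hsum : ∑ k ∈ Finset.range n, ∫ y in (a k)..(a (k+1)), f y = ∫ y in (a 0)..(a n), f y :=
    intervalIntegral.sum_integral_adjacent_intervals (fun k _ => (hf.intervalIntegrable _ _))
  have ha0 : a 0 = A := by simp [ha]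
  have han : a n = A + n*h := rfl
  rw [ha0, han] at hsum
  rw [← hsum, ← Finset.sum_sub_distrib]
  refine (Finset.abs_sum_le_sum_abs _ _).trans ?_
  rw [show (n : ℝ) * (h * c) = ∑ _i ∈ Finset.range n, h * c by
    rw [Finset.sum_const, Finset.card_range]; push_cast; ring]
  apply Finset.sum_le_sum
  intro i hi
  have hstep : a (i+1) = a i + h := by simp [ha]; push_cast; ring
  have hconst : f (A + i*h + h/2) * h = ∫ _y in (a i)..(a (i+1)), f (A + i*h + h/2) := by
    rw [intervalIntegral.integral_const, hstep]
    simp [smul_eq_mul]; ring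
  rw [hconst, ← intervalIntegral.integral_sub intervalIntegrable_const
      ((hf.intervalIntegrable _ _))]
  have hle : a i ≤ a (i+1) := by rw [hstep]; linarith
  have := intervalIntegral.norm_integral_le_of_norm_le_const
    (a := a i) (b := a (i+1)) (C := c)
    (f := fun y => f (A + i*h + h/2) - f y) ?_
  · rw [Real.norm_eq_abs] at this
    calc |∫ y in (a i)..(a (i+1)), (f (A + i*h + h/2) - f y)| ≤ c * |a (i+1) - a i| := this
    _ = h * c := by rw [hstep]; rw [abs_of_nonneg (by linarith : (0:ℝ) ≤ a i + h - a i)]; ring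
  · intro y hy
    rw [Set.uIoc_of_le hle, hstep] at hy
    have hy' : y ∈ Set.Icc (A + i*h) (A + i*h + h) := ⟨le_of_lt hy.1, hy.2⟩
    rw [Real.norm_eq_abs, abs_sub_comm]
    exact hc i hi y hy'

set_option maxHeartbeats 2000000 in
/-- Theorem 1: the PNN is a universal approximator for differentiable one-dimensional
densities with bounded support: normalized derivatives of logistic mixture cdfs uniformly
approximate any differentiable probability density supported on `[A, B]`. -/
theorem pnn_universal_density_approximation
    (A B : ℝ) (hAB : A < B)
    (ν : ℝ → ℝ) (hνdiff : Differentiable ℝ ν)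
    (hνnonneg : ∀ x, 0 ≤ ν x)
    (hνsupp : ∀ x, x ∉ Icc A B → ν x = 0)
    (hνint : (∫ x in A..B, ν x) = 1) :
    ∀ ε > (0 : ℝ), ∃ (k : ℕ), 1 ≤ k ∧ ∃ (α μ s : Fin k → ℝ),
      (∀ i, 0 < α i) ∧ (∑ i, α i = 1) ∧ (∀ i, 0 < s i) ∧
      ∃ Astar Bstar : ℝ, Astar < Bstar ∧
        ∀ x ∈ Icc A B,
          |(∑ i, (α i / s i) * deriv sigmoid ((x - μ i) / s i))
            / ((∑ i, α i * sigmoid ((Bstar - μ i) / s i))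
              - ∑ i, α i * sigmoid ((Astar - μ i) / s i))
            - ν x| < ε := by
  intro ε hε
  have hνc : Continuous ν := hνdiff.continuous
  set L : ℝ := B - A with hLdef
  have hL : 0 < L := by simp only [hLdef]; linarith
  have hL1 : (0:ℝ) < L + 1 := by linarith
  -- bound M on ν
  obtain ⟨x0, hx0, hmax⟩ := isCompact_Icc.exists_isMaxOn (nonempty_Icc.mpr hAB.le)
    (hνc.continuousOn (s := Icc A B))
  set M : ℝ := ν x0 + 1 with hMdef
  have hM1 : (1:ℝ) ≤ M := by have := hνnonneg x0; simp only [hMdef]; linarith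
  have hM0 : (0:ℝ) < M := lt_of_lt_of_le one_pos hM1
  have hνle : ∀ x, ν x ≤ M := by
    intro x
    by_cases hx : x ∈ Icc A B
    · have h2 : ν x ≤ ν x0 := hmax hx
      simp only [hMdef]; linarith
    · rw [hνsupp x hx]; linarith
  -- uniform continuity modulus
  have hcs : HasCompactSupport ν := HasCompactSupport.intro isCompact_Icc hνsupp
  have huc : UniformContinuous ν :=
    hνc.uniformContinuous_of_tendsto_cocompact hcs.is_zero_at_infty
  have mod : ∀ η : ℝ, 0 < η → ∃ δ : ℝ, 0 < δ ∧ ∀ a b : ℝ, |a - b| ≤ δ → |ν a - ν b| ≤ η := by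
    intro η hη
    obtain ⟨δ, hδ, hd⟩ := Metric.uniformContinuous_iff.1 huc η hη
    refine ⟨δ/2, by linarith, fun a b hab => ?_⟩
    have := hd (a := a) (b := b) (by rw [Real.dist_eq]; linarith)
    rw [Real.dist_eq] at this; linarith
  -- boundary values vanish
  have hνA : ν A = 0 := by
    have h0 : ν A ≤ 0 := by
      apply le_of_forall_pos_le_add
      intro η hη
      obtain ⟨δ, hδ, hm⟩ := mod η hη
      have hz : ν (A - δ) = 0 := hνsupp _ (by simp [Set.mem_Icc]; intro h'; linarith)
      have := hm A (A - δ) (by rw [abs_of_nonneg (by linarith)]; linarith)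
      rw [hz, sub_zero, abs_of_nonneg (hνnonneg A)] at this
      linarith
    linarith [hνnonneg A]
  have hνB : ν B = 0 := by
    have h0 : ν B ≤ 0 := by
      apply le_of_forall_pos_le_add
      intro η hη
      obtain ⟨δ, hδ, hm⟩ := mod η hη
      have hz : ν (B + δ) = 0 := hνsupp _ (by simp [Set.mem_Icc]; intro h'; linarith)
      have := hm B (B + δ) (by rw [abs_of_nonpos (by linarith)]; linarith)
      rw [hz, sub_zero, abs_of_nonneg (hνnonneg B)] at this
      linarith
    linarith [hνnonneg B]
  -- epsilon budget
  set ε₁ : ℝ := min ε 1 / 100 with hε₁def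
  have hε₁ : 0 < ε₁ := by
    have : 0 < min ε 1 := lt_min hε one_pos
    simp only [hε₁def]; linarith
  have hε₁ε : 100 * ε₁ ≤ ε := by
    simp only [hε₁def]; have := min_le_left ε 1; linarith
  have hε₁1 : ε₁ ≤ 1/100 := by
    simp only [hε₁def]; have := min_le_right ε 1; linarith
  -- choose δ for modulus ε₁
  obtain ⟨δ, hδ, hδmod⟩ := mod ε₁ hε₁
  -- choose s
  set s : ℝ := min 1 (ε₁ * δ^2 / (4*M*(L+1))) with hsdef
  have hs : 0 < s := lt_min one_pos (by positivity)
  have hs1 : s ≤ 1 := min_le_left _ _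
  have hskey : 4*M*(L+1)*s/δ^2 ≤ ε₁ := by
    have h2 : s ≤ ε₁ * δ^2 / (4*M*(L+1)) := min_le_right _ _
    rw [div_le_iff₀ (by positivity)]
    rw [le_div_iff₀ (by positivity)] at h2
    nlinarith
  -- choose κ and δ₂
  set κ : ℝ := s^2 * ε₁ / (4*M*(L+1)^2) with hκdef
  have hκ : 0 < κ := by positivity
  obtain ⟨δ₂, hδ₂, hδ₂mod⟩ := mod κ hκ
  -- choose n
  obtain ⟨n₀, hn₀⟩ := exists_nat_gt (L / min δ₂ κ)
  set n : ℕ := n₀ + 1 with hndef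
  have hn0 : 0 < n := Nat.succ_pos _
  have hnR : (0:ℝ) < n := by exact_mod_cast hn0
  set h : ℝ := L / n with hhdef
  have hh : 0 < h := div_pos hL hnR
  have hnh : (n:ℝ) * h = L := by rw [hhdef]; field_simp
  have hmm : 0 < min δ₂ κ := lt_min hδ₂ hκ
  have hhle : h ≤ min δ₂ κ := by
    have hlt : L / min δ₂ κ < (n:ℝ) := lt_of_lt_of_le hn₀ (by exact_mod_cast Nat.le_succ n₀)
    rw [div_lt_iff₀ hmm] at hlt
    rw [hhdef, div_le_iff₀ hnR]
    nlinarith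
  have hhδ₂ : h ≤ δ₂ := le_trans hhle (min_le_left _ _)
  have hhκ : h ≤ κ := le_trans hhle (min_le_right _ _)
  -- grid
  set Mu : ℕ → ℝ := fun i => A + i*h + h/2 with hMu
  have hMuIcc : ∀ i, i < n → Mu i ∈ Icc A B := by
    intro i hi
    have hi' : (i:ℝ) + 1 ≤ n := by exact_mod_cast Nat.succ_le_of_lt hi
    have h1 : (i:ℝ)*h + h ≤ (n:ℝ)*h := by nlinarith
    constructor
    · simp only [hMu]
      have hi0 : (0:ℝ) ≤ (i:ℝ) := Nat.cast_nonneg i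
      nlinarith
    · simp only [hMu]; nlinarith [hnh]
  -- weights
  set W : ℝ := ∑ i ∈ Finset.range n, (ν (Mu i) * h + h^2) with hWdef
  have hterm : ∀ i, 0 < ν (Mu i) * h + h^2 := by
    intro i; have := hνnonneg (Mu i); nlinarith
  have hWpos : 0 < W := Finset.sum_pos (fun i _ => hterm i) (by simp [hndef])
  -- cdf bounds location
  set C : ℝ := max |A| |B| with hCdef
  have hC0 : 0 ≤ C := le_trans (abs_nonneg A) (le_max_left _ _)
  have hMuC : ∀ i, i < n → |Mu i| ≤ C := by
    intro i hi
    obtain ⟨h1, h2⟩ := hMuIcc i hi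
    rw [abs_le]
    constructor
    · have := neg_abs_le A; have := le_max_left |A| |B|; simp only [hCdef]; linarith
    · have := le_abs_self B; have := le_max_right |A| |B|; simp only [hCdef]; linarith
  set q : ℝ := max 4 (1/(s*ε₁)) with hqdef
  have hq4 : (4:ℝ) ≤ q := le_max_left _ _
  have hq0 : 0 < q := by linarith
  set R : ℝ := C + s * Real.log q with hRdef
  have hτeq : Real.exp (-((R - C)/s)) = 1/q := by
    rw [hRdef]
    have : (C + s * Real.log q - C)/s = Real.log q := by field_simp; ring
    rw [this, Real.exp_neg, Real.exp_log hq0, one_div]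
  have hτ4 : Real.exp (-((R - C)/s)) ≤ 1/4 := by
    rw [hτeq]; rw [div_le_div_iff₀ hq0 (by norm_num)]; linarith
  have hτs : Real.exp (-((R - C)/s)) ≤ s * ε₁ := by
    rw [hτeq]
    have h1 : 1/(s*ε₁) ≤ q := le_max_right _ _
    rw [div_le_iff₀ hq0]
    rw [div_le_iff₀ (by positivity)] at h1
    nlinarith [mul_pos hs hε₁]
  have hR0 : 0 < R := by
    have hlog : 0 < Real.log q := Real.log_pos (by linarith)
    simp only [hRdef]; nlinarith
  have hκeq : 4*M*(L+1)^2*κ = s^2*ε₁ := by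
    rw [hκdef]; field_simp
  have hMufold : ∀ i : ℕ, A + ↑i*h + h/2 = Mu i := fun i => rfl
  clear_value L M ε₁ s κ n h Mu W C q R
  -- the parameters
  refine ⟨n, hn0, fun i => (ν (Mu i) * h + h^2)/W, fun i => Mu i, fun _ => s,
    fun i => div_pos (hterm i) hWpos, ?_, fun _ => hs, -R, R, by linarith, ?_⟩
  · rw [← Finset.sum_div]
    rw [Fin.sum_univ_eq_sum_range (fun i => (ν (Mu i) * h + h^2))]
    rw [← hWdef, div_self (ne_of_gt hWpos)]
  intro x hx
  obtain ⟨hxA, hxB⟩ := hx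
  have h4s : (0:ℝ) < 4*s := by linarith only [hs]
  have hskey' : 4*M*(L+1)*s ≤ ε₁*δ^2 := by
    rw [div_le_iff₀ (pow_pos hδ 2)] at hskey; linarith only [hskey]
  have hgrow1 : L ≤ M*(L+1)^2 := by
    nlinarith only [mul_nonneg (sub_nonneg.2 hM1) (sq_nonneg (L+1)), hL, sq_nonneg L]
  have hgrow2 : L*M ≤ M*(L+1)^2 := by
    nlinarith only [mul_nonneg hM0.le (show (0:ℝ) ≤ L^2 + L + 1 by nlinarith only [hL, sq_nonneg L])]
  have hgrow3 : M*L^2 ≤ M*(L+1)^2 := by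
    nlinarith only [mul_nonneg hM0.le (show (0:ℝ) ≤ 2*L + 1 by linarith only [hL])]
  have hb1 : L*κ ≤ s^2*ε₁/4 := by
    have t := mul_le_mul_of_nonneg_right hgrow1 hκ.le
    linarith only [t, hκeq]
  have hb2 : L*M*κ ≤ s^2*ε₁/4 := by
    have t := mul_le_mul_of_nonneg_right hgrow2 hκ.le
    linarith only [t, hκeq]
  have hb4 : M*L^2*κ ≤ s^2*ε₁/4 := by
    have t := mul_le_mul_of_nonneg_right hgrow3 hκ.le
    linarith only [t, hκeq]
  have hs2ε : s^2*ε₁ ≤ ε₁ := by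
    have t := mul_nonneg (mul_nonneg (sub_nonneg.2 hs1) (by linarith only [hs, hs1] : (0:ℝ) ≤ 1 + s)) hε₁.le
    nlinarith only [t]
  have hsε : s*ε₁ ≤ ε₁ := by
    have t := mul_nonneg (sub_nonneg.2 hs1) hε₁.le
    nlinarith only [t]
  have hdivmono : ∀ a b : ℝ, a ≤ b → a/s ≤ b/s := fun a b hab => by
    rw [div_le_div_iff₀ hs hs]
    exact mul_le_mul_of_nonneg_right hab hs.le
  have hKfcont : Continuous (fun y : ℝ => 1/s * gexp ((x - y)/s)) :=
    continuous_const.mul (gexp_continuous.comp ((continuous_const.sub continuous_id).div_const s))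
  have hABn : A + (n:ℝ)*h = B := by rw [hnh]; simp only [hLdef]; ring
  have hgrid : ∀ i ∈ Finset.range n, ∀ y ∈ Set.Icc (A + i*h) (A + i*h + h), |y - Mu i| ≤ h := by
    intro i _ y hy
    obtain ⟨h1, h2⟩ := hy
    rw [abs_le]
    constructor <;> simp only [hMu] <;> linarith only [h1, h2, hh]
  -- Riemann sum for S
  have hbories : ∀ i ∈ Finset.range n, ∀ y ∈ Set.Icc (A + i*h) (A + i*h + h),
      |ν y - ν (A + i*h + h/2)| ≤ κ := by
    intro i hi y hy
    have h1 := hgrid i hi y hy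
    exact hδ₂mod _ _ (le_trans (by simpa [hMu] using h1) hhδ₂)
  have hRieS := riemann_sum_err ν hνc A h hh n κ hbories
  rw [hABn, hνint] at hRieS
  rw [show (n:ℝ)*(h*κ) = L*κ from by rw [← hnh]; ring] at hRieS
  simp only [hMufold] at hRieS
  set S : ℝ := ∑ i ∈ Finset.range n, ν (Mu i) * h with hSdef
  clear_value S
  have hWS : W = S + L*h := by
    rw [hWdef, hSdef, Finset.sum_add_distrib, Finset.sum_const, Finset.card_range, nsmul_eq_mul]
    rw [show (n:ℝ)*h^2 = L*h from by rw [← hnh]; ring]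
  have hW1κ : |W - 1| ≤ 2*(L*κ) := by
    have h1 : |S - 1| ≤ L*κ := hRieS
    have h2 : L*h ≤ L*κ := mul_le_mul_of_nonneg_left hhκ hL.le
    rw [hWS, show S + L*h - 1 = (S - 1) + L*h from by ring]
    refine (abs_add_le _ _).trans ?_
    rw [abs_of_nonneg (mul_nonneg hL.le hh.le)]
    linarith only [h1, h2]
  have hWhalf : 1/2 ≤ W := by
    have h1 := (abs_le.1 hW1κ).1
    linarith only [h1, hb1, hs2ε, hε₁1]
  -- main sums
  set Kf : ℝ → ℝ := fun y => 1/s * gexp ((x - y)/s) with hKf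
  set T : ℝ := ∑ i ∈ Finset.range n, ν (Mu i) * Kf (Mu i) * h with hTdef
  set U : ℝ := ∑ i ∈ Finset.range n, Kf (Mu i) with hUdef
  set P : ℝ := ∑ i ∈ Finset.range n, (ν (Mu i) * h + h^2)/W * Kf (Mu i) with hPdef
  set D : ℝ := ∑ i ∈ Finset.range n, (ν (Mu i) * h + h^2)/W *
      (sigmoid ((R - Mu i)/s) - sigmoid ((-R - Mu i)/s)) with hDdef
  clear_value Kf T U P D
  have hKC : Continuous Kf := hKfcont
  have hW0 : W ≠ 0 := ne_of_gt hWpos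
  have hαsum : ∑ i ∈ Finset.range n, (ν (Mu i) * h + h^2)/W = 1 := by
    rw [← Finset.sum_div, ← hWdef, div_self (ne_of_gt hWpos)]
  have hα0 : ∀ i, (0:ℝ) ≤ (ν (Mu i) * h + h^2)/W := fun i => (div_pos (hterm i) hWpos).le
  -- goal reduction
  simp only [deriv_sigmoid]
  rw [Fin.sum_univ_eq_sum_range (fun i => (ν (Mu i) * h + h^2)/W/s * gexp ((x - Mu i)/s)) n,
      Fin.sum_univ_eq_sum_range (fun i => (ν (Mu i) * h + h^2)/W * sigmoid ((R - Mu i)/s)) n,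
      Fin.sum_univ_eq_sum_range (fun i => (ν (Mu i) * h + h^2)/W * sigmoid ((-R - Mu i)/s)) n]
  have hnum : ∑ i ∈ Finset.range n, (ν (Mu i) * h + h^2)/W/s * gexp ((x - Mu i)/s) = P := by
    rw [hPdef]
    refine Finset.sum_congr rfl (fun i _ => ?_)
    simp only [hKf]
    ring
  have hden : (∑ i ∈ Finset.range n, (ν (Mu i) * h + h^2)/W * sigmoid ((R - Mu i)/s))
      - ∑ i ∈ Finset.range n, (ν (Mu i) * h + h^2)/W * sigmoid ((-R - Mu i)/s) = D := by
    rw [hDdef, ← Finset.sum_sub_distrib]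
    exact Finset.sum_congr rfl (fun i _ => by ring)
  rw [hnum, hden]
  -- kernel bounds
  have hKpos : ∀ t, (0:ℝ) ≤ Kf t := by
    intro t
    simp only [hKf]
    exact mul_nonneg (le_of_lt (one_div_pos.2 hs)) (gexp_pos _).le
  have hKle : ∀ t, Kf t ≤ 1/(4*s) := by
    intro t
    simp only [hKf]
    calc 1/s * gexp ((x - t)/s) ≤ 1/s * (1/4) :=
          mul_le_mul_of_nonneg_left (gexp_le_quarter _) (le_of_lt (one_div_pos.2 hs))
      _ = 1/(4*s) := by ring
  -- D bounds
  set τ : ℝ := Real.exp (-((R - C)/s)) with hτdef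
  clear_value τ
  have hτpos : (0:ℝ) < τ := by rw [hτdef]; exact Real.exp_pos _
  have hDle1 : D ≤ 1 := by
    rw [hDdef]
    calc ∑ i ∈ Finset.range n, (ν (Mu i) * h + h^2)/W *
          (sigmoid ((R - Mu i)/s) - sigmoid ((-R - Mu i)/s))
        ≤ ∑ i ∈ Finset.range n, (ν (Mu i) * h + h^2)/W := by
          refine Finset.sum_le_sum (fun i _ => ?_)
          have h1 := sigmoid_lt_one ((R - Mu i)/s)
          have h2 := sigmoid_pos ((-R - Mu i)/s)
          have t := mul_le_mul_of_nonneg_left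
            (show sigmoid ((R - Mu i)/s) - sigmoid ((-R - Mu i)/s) ≤ 1 by linarith only [h1, h2])
            (hα0 i)
          linarith only [t]
      _ = 1 := hαsum
  have hDge : 1 - 2*τ ≤ D := by
    have hstep : ∀ i ∈ Finset.range n, (ν (Mu i)*h + h^2)/W * (1 - 2*τ)
        ≤ (ν (Mu i)*h + h^2)/W * (sigmoid ((R - Mu i)/s) - sigmoid ((-R - Mu i)/s)) := by
      intro i hi
      have habs := abs_le.1 (hMuC i (Finset.mem_range.1 hi))
      have e1 : 1 - τ ≤ sigmoid ((R - Mu i)/s) := by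
        have h1 := one_sub_sigmoid_le ((R - Mu i)/s)
        have h2 : Real.exp (-((R - Mu i)/s)) ≤ τ := by
          rw [hτdef]
          apply Real.exp_le_exp.mpr
          rw [neg_le_neg_iff]
          exact hdivmono _ _ (by linarith only [habs.2])
        linarith only [h1, h2]
      have e2 : sigmoid ((-R - Mu i)/s) ≤ τ := by
        refine (sigmoid_le_exp _).trans ?_
        rw [hτdef]
        apply Real.exp_le_exp.mpr
        rw [show -((R - C)/s) = (-(R - C))/s from by ring]
        exact hdivmono _ _ (by linarith only [habs.1])
      exact mul_le_mul_of_nonneg_left (by linarith only [e1, e2]) (hα0 i)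
    calc 1 - 2*τ = (∑ i ∈ Finset.range n, (ν (Mu i)*h + h^2)/W) * (1 - 2*τ) := by
          rw [hαsum, one_mul]
      _ = ∑ i ∈ Finset.range n, (ν (Mu i)*h + h^2)/W * (1 - 2*τ) := Finset.sum_mul _ _ _
      _ ≤ D := by rw [hDdef]; exact Finset.sum_le_sum hstep
  have hDhalf : 1/2 ≤ D := by linarith only [hDge, hτ4]
  have hDpos : (0:ℝ) < D := by linarith only [hDhalf]
  -- P bounds
  have hPpos : (0:ℝ) ≤ P := by
    rw [hPdef]
    exact Finset.sum_nonneg (fun i _ => mul_nonneg (hα0 i) (hKpos _))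
  have hP4 : P ≤ 1/(4*s) := by
    rw [hPdef]
    calc ∑ i ∈ Finset.range n, (ν (Mu i) * h + h^2)/W * Kf (Mu i)
        ≤ ∑ i ∈ Finset.range n, (ν (Mu i) * h + h^2)/W * (1/(4*s)) :=
          Finset.sum_le_sum (fun i _ => mul_le_mul_of_nonneg_left (hKle _) (hα0 i))
      _ = 1/(4*s) := by rw [← Finset.sum_mul, hαsum, one_mul]
  -- normalization error
  have hE9 : |P/D - P| ≤ ε₁ := by
    have hD0 : D ≠ 0 := ne_of_gt hDpos
    have heq : P/D - P = P*(1-D)/D := by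
      rw [mul_sub, mul_one, sub_div, mul_div_cancel_right₀ _ hD0]
    rw [heq, abs_div, abs_of_pos hDpos, abs_mul, abs_of_nonneg hPpos,
        abs_of_nonneg (by linarith only [hDle1] : (0:ℝ) ≤ 1 - D)]
    rw [div_le_iff₀ hDpos]
    have h2 : P*(1-D) ≤ (1/(4*s))*(2*τ) :=
      mul_le_mul hP4 (by linarith only [hDge]) (by linarith only [hDle1])
        (le_of_lt (one_div_pos.2 h4s))
    have h5 : (1/(4*s))*(2*τ) ≤ (1/(4*s))*(2*(s*ε₁)) :=
      mul_le_mul_of_nonneg_left (by linarith only [hτs] : 2*τ ≤ 2*(s*ε₁))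
        (le_of_lt (one_div_pos.2 h4s))
    have h4 : (1/(4*s))*(2*(s*ε₁)) = ε₁/2 := by field_simp; ring
    have h6 := mul_le_mul_of_nonneg_left hDhalf hε₁.le
    linarith only [h2, h5, h4, h6]
  -- Riemann sum for T
  have e3 : L*κ/(4*s) ≤ s*ε₁/16 := by
    rw [div_le_div_iff₀ h4s (by norm_num)]
    nlinarith only [hb1]
  have hboundT : ∀ i ∈ Finset.range n, ∀ y ∈ Set.Icc (A + i*h) (A + i*h + h),
      |ν y * Kf y - ν (A + i*h + h/2) * Kf (A + i*h + h/2)| ≤ κ/(4*s) + M*(h/s^2) := by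
    intro i hi y hy
    have hyμ : |y - Mu i| ≤ h := hgrid i hi y hy
    rw [hMufold i]
    have hν1 : |ν y - ν (Mu i)| ≤ κ := hδ₂mod _ _ (hyμ.trans hhδ₂)
    have hg2 : |gexp ((x - y)/s) - gexp ((x - Mu i)/s)| ≤ h/s := by
      refine (gexp_lipschitz _ _).trans ?_
      rw [show (x - y)/s - (x - Mu i)/s = (Mu i - y)/s from by ring, abs_div, abs_of_pos hs]
      apply hdivmono
      rw [abs_sub_comm] at hyμ
      exact hyμ
    have key : ν y * Kf y - ν (Mu i) * Kf (Mu i)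
        = (ν y - ν (Mu i)) * Kf y
          + ν (Mu i) * (1/s) * (gexp ((x - y)/s) - gexp ((x - Mu i)/s)) := by
      simp only [hKf]; ring
    rw [key]
    refine (abs_add_le _ _).trans ?_
    have e1 : |(ν y - ν (Mu i)) * Kf y| ≤ κ/(4*s) := by
      rw [abs_mul, abs_of_nonneg (hKpos y)]
      calc |ν y - ν (Mu i)| * Kf y ≤ κ * (1/(4*s)) :=
            mul_le_mul hν1 (hKle y) (hKpos y) hκ.le
        _ = κ/(4*s) := by ring
    have e2 : |ν (Mu i) * (1/s) * (gexp ((x - y)/s) - gexp ((x - Mu i)/s))| ≤ M*(h/s^2) := by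
      rw [abs_mul, abs_mul, abs_of_nonneg (hνnonneg _),
          abs_of_nonneg (le_of_lt (one_div_pos.2 hs))]
      calc ν (Mu i) * (1/s) * |gexp ((x - y)/s) - gexp ((x - Mu i)/s)|
          ≤ M * (1/s) * (h/s) :=
            mul_le_mul (mul_le_mul_of_nonneg_right (hνle _) (le_of_lt (one_div_pos.2 hs)))
              hg2 (abs_nonneg _)
              (mul_nonneg hM0.le (le_of_lt (one_div_pos.2 hs)))
        _ = M*(h/s^2) := by field_simp
    linarith only [e1, e2]
  have hRieT := riemann_sum_err (fun y => ν y * Kf y) (hνc.mul hKC) A h hh n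
      (κ/(4*s) + M*(h/s^2)) hboundT
  rw [hABn] at hRieT
  rw [show (n:ℝ)*(h*(κ/(4*s) + M*(h/s^2))) = L*κ/(4*s) + L*(M*(h/s^2)) from by
    rw [← hnh]; ring] at hRieT
  simp only [hMufold] at hRieT
  have e4 : L*(M*(h/s^2)) ≤ ε₁/4 := by
    rw [show L*(M*(h/s^2)) = (L*M*h)/s^2 from by ring, div_le_iff₀ (pow_pos hs 2)]
    have t := mul_le_mul_of_nonneg_left hhκ (mul_nonneg hL.le hM0.le)
    nlinarith only [hb2, t]
  have hE1 : |T - ∫ y in A..B, ν y * Kf y| ≤ ε₁ := by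
    rw [hTdef]
    refine le_trans hRieT ?_
    linarith only [e3, e4, hsε, hε₁]
  -- convolution estimate
  have hIeq : ∫ y in A..B, Kf y = sigmoid ((x-A)/s) - sigmoid ((x-B)/s) := by
    simp only [hKf]; exact kernel_integral s x A B hs
  have hI0 : 0 ≤ sigmoid ((x-A)/s) - sigmoid ((x-B)/s) := by
    have := sigmoid_mono (hdivmono (x-B) (x-A) (by linarith only [hAB]))
    linarith only [this]
  have hI1 : sigmoid ((x-A)/s) - sigmoid ((x-B)/s) ≤ 1 := by
    linarith only [sigmoid_lt_one ((x-A)/s), sigmoid_pos ((x-B)/s)]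
  have heδ : Real.exp (-(δ/s)) ≤ 2*s^2/δ^2 := by
    have h1 := exp_neg_le_two_div_sq (div_pos hδ hs)
    rw [div_pow] at h1
    rw [show (2:ℝ)*s^2/δ^2 = 2/(δ^2/s^2) from (div_div_eq_mul_div 2 (δ^2) (s^2)).symm]
    exact h1
  have hfint : IntervalIntegrable (fun y => ν y * Kf y) MeasureTheory.volume A B :=
    (hνc.mul hKC).intervalIntegrable _ _
  have hconv : |(∫ y in A..B, ν y * Kf y)
      - ν x * (sigmoid ((x-A)/s) - sigmoid ((x-B)/s))| ≤ 2*ε₁ := by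
    have hdiff : (∫ y in A..B, ν y * Kf y) - ν x * (sigmoid ((x-A)/s) - sigmoid ((x-B)/s))
        = ∫ y in A..B, (ν y - ν x) * Kf y := by
      rw [← hIeq, ← intervalIntegral.integral_const_mul,
          ← intervalIntegral.integral_sub hfint
            ((hKC.intervalIntegrable _ _).const_mul (ν x))]
      apply intervalIntegral.integral_congr
      intro y _
      ring
    rw [hdiff]
    have hGc : Continuous (fun y : ℝ => ε₁ * Kf y + 2*M*(1/s*Real.exp (-(δ/s)))) :=
      (continuous_const.mul hKC).add continuous_const
    have hcst : (0:ℝ) ≤ 2*M*(1/s*Real.exp (-(δ/s))) :=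
      mul_nonneg (by linarith only [hM0]) (mul_nonneg (le_of_lt (one_div_pos.2 hs))
        (Real.exp_pos _).le)
    have hptw : ∀ y : ℝ, ‖(ν y - ν x) * Kf y‖ ≤ ε₁ * Kf y + 2*M*(1/s*Real.exp (-(δ/s))) := by
      intro y
      rw [Real.norm_eq_abs, abs_mul, abs_of_nonneg (hKpos y)]
      rcases le_or_gt |y - x| δ with hyd | hyd
      · have h1 : |ν y - ν x| ≤ ε₁ := hδmod _ _ hyd
        have t := mul_le_mul_of_nonneg_right h1 (hKpos y)
        linarith only [t, hcst]
      · have h1 : |ν y - ν x| ≤ 2*M := by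
          rw [abs_le]
          constructor
          · linarith only [hνle x, hνnonneg y, hM0.le]
          · linarith only [hνle y, hνnonneg x, hM0.le]
        have h2 : Kf y ≤ 1/s*Real.exp (-(δ/s)) := by
          simp only [hKf]
          refine mul_le_mul_of_nonneg_left ?_ (le_of_lt (one_div_pos.2 hs))
          refine (gexp_le_exp_neg_abs _).trans ?_
          apply Real.exp_le_exp.mpr
          rw [neg_le_neg_iff, abs_div, abs_of_pos hs]
          apply hdivmono
          rw [abs_sub_comm] at hyd
          linarith only [hyd.le]
        have h3 : (0:ℝ) ≤ ε₁ * Kf y := mul_nonneg hε₁.le (hKpos y)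
        have t := mul_le_mul h1 h2 (hKpos y) (by linarith only [hM0] : (0:ℝ) ≤ 2*M)
        linarith only [t, h3]
    have hbnd := intervalIntegral.norm_integral_le_of_norm_le
      (f := fun y => (ν y - ν x) * Kf y)
      (g := fun y => ε₁ * Kf y + 2*M*(1/s*Real.exp (-(δ/s))))
      (μ := MeasureTheory.volume) (a := A) (b := B)
      hAB.le (MeasureTheory.ae_of_all _ (fun y _ => hptw y)) (hGc.intervalIntegrable _ _)
    rw [Real.norm_eq_abs] at hbnd
    refine hbnd.trans ?_
    have hGval : (∫ y in A..B, (ε₁ * Kf y + 2*M*(1/s*Real.exp (-(δ/s)))))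
        = ε₁*(sigmoid ((x-A)/s) - sigmoid ((x-B)/s))
          + (B - A)*(2*M*(1/s*Real.exp (-(δ/s)))) := by
      rw [intervalIntegral.integral_add ((hKC.intervalIntegrable _ _).const_mul ε₁)
          intervalIntegrable_const,
          intervalIntegral.integral_const_mul, hIeq, intervalIntegral.integral_const]
      rw [smul_eq_mul]
    rw [hGval]
    have hsecond : (B - A)*(2*M*(1/s*Real.exp (-(δ/s)))) ≤ ε₁ := by
      have h5 : 1/s*Real.exp (-(δ/s)) ≤ 2*s/δ^2 := by
        calc 1/s*Real.exp (-(δ/s)) ≤ 1/s*(2*s^2/δ^2) :=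
              mul_le_mul_of_nonneg_left heδ (le_of_lt (one_div_pos.2 hs))
          _ = 2*s/δ^2 := by
              field_simp [hs.ne']
      calc (B - A)*(2*M*(1/s*Real.exp (-(δ/s)))) ≤ (B - A)*(2*M*(2*s/δ^2)) := by
            refine mul_le_mul_of_nonneg_left
              (mul_le_mul_of_nonneg_left h5 (by linarith only [hM0])) (by linarith only [hAB])
        _ = 4*(L*M*s)/δ^2 := by simp only [hLdef]; ring
        _ ≤ ε₁ := by
            rw [div_le_iff₀ (pow_pos hδ 2)]
            have t := mul_pos hM0 hs
            linarith only [hskey', t]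
    have habs : (0:ℝ) ≤ ε₁*(sigmoid ((x-A)/s) - sigmoid ((x-B)/s))
        + (B - A)*(2*M*(1/s*Real.exp (-(δ/s)))) := by
      have h7 := mul_nonneg hε₁.le hI0
      have h6 : (0:ℝ) ≤ (B - A)*(2*M*(1/s*Real.exp (-(δ/s)))) :=
        mul_nonneg (by linarith only [hAB]) hcst
      linarith only [h7, h6]
    have h8 := mul_le_mul_of_nonneg_left hI1 hε₁.le
    linarith only [h8, hsecond]
  -- boundary estimate
  have hbE3 : |ν x * (sigmoid ((x-A)/s) - sigmoid ((x-B)/s)) - ν x| ≤ 2*ε₁ := by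
    have hMe : M*(2*s^2/δ^2) ≤ ε₁ := by
      rw [show M*(2*s^2/δ^2) = 2*M*s^2/δ^2 from by ring, div_le_iff₀ (pow_pos hδ 2)]
      have t := mul_nonneg (mul_nonneg hM0.le hs.le)
        (show (0:ℝ) ≤ 2*(L+1) - s by linarith only [hs1, hL])
      nlinarith only [hskey', t]
    have e5 : ν x * (1 - sigmoid ((x-A)/s)) ≤ ε₁ := by
      rcases le_or_gt (x - A) δ with hc | hc
      · have h1 : ν x ≤ ε₁ := by
          have := hδmod x A (by rw [abs_of_nonneg (by linarith only [hxA])]; exact hc)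
          rw [hνA, sub_zero, abs_of_nonneg (hνnonneg x)] at this
          exact this
        have t := mul_le_mul_of_nonneg_left
          (show 1 - sigmoid ((x-A)/s) ≤ 1 by linarith only [sigmoid_pos ((x-A)/s)]) (hνnonneg x)
        linarith only [t, h1]
      · have h1 : 1 - sigmoid ((x-A)/s) ≤ Real.exp (-(δ/s)) := by
          refine (one_sub_sigmoid_le _).trans ?_
          apply Real.exp_le_exp.mpr
          rw [neg_le_neg_iff]
          exact hdivmono _ _ (by linarith only [hc])
        have t1 := mul_le_mul_of_nonneg_right (hνle x)
          (show (0:ℝ) ≤ 1 - sigmoid ((x-A)/s) by linarith only [sigmoid_lt_one ((x-A)/s)])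
        have t2 := mul_le_mul_of_nonneg_left h1 hM0.le
        have t3 := mul_le_mul_of_nonneg_left heδ hM0.le
        linarith only [t1, t2, t3, hMe]
    have e6 : ν x * sigmoid ((x-B)/s) ≤ ε₁ := by
      rcases le_or_gt (B - x) δ with hc | hc
      · have h1 : ν x ≤ ε₁ := by
          have := hδmod x B (by rw [abs_of_nonpos (by linarith only [hxB])]; linarith only [hc])
          rw [hνB, sub_zero, abs_of_nonneg (hνnonneg x)] at this
          exact this
        have t := mul_le_mul_of_nonneg_left
          (show sigmoid ((x-B)/s) ≤ 1 by linarith only [sigmoid_lt_one ((x-B)/s)]) (hνnonneg x)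
        linarith only [t, h1]
      · have h1 : sigmoid ((x-B)/s) ≤ Real.exp (-(δ/s)) := by
          refine (sigmoid_le_exp _).trans ?_
          apply Real.exp_le_exp.mpr
          rw [show -(δ/s) = (-δ)/s from by ring]
          exact hdivmono _ _ (by linarith only [hc])
        have t1 := mul_le_mul_of_nonneg_right (hνle x) (sigmoid_pos ((x-B)/s)).le
        have t2 := mul_le_mul_of_nonneg_left h1 hM0.le
        have t3 := mul_le_mul_of_nonneg_left heδ hM0.le
        linarith only [t1, t2, t3, hMe]
    have hup : ν x * (sigmoid ((x-A)/s) - sigmoid ((x-B)/s)) - ν x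
        = -(ν x * (1 - sigmoid ((x-A)/s)) + ν x * sigmoid ((x-B)/s)) := by ring
    rw [hup, abs_neg, abs_of_nonneg (by
      have h7 := mul_nonneg (hνnonneg x)
        (show (0:ℝ) ≤ 1 - sigmoid ((x-A)/s) by linarith only [sigmoid_lt_one ((x-A)/s)])
      have h8 := mul_nonneg (hνnonneg x) (sigmoid_pos ((x-B)/s)).le
      linarith only [h7, h8])]
    linarith only [e5, e6]
  -- tail term h^2 U
  have hU0 : (0:ℝ) ≤ U := by
    rw [hUdef]; exact Finset.sum_nonneg (fun i _ => hKpos _)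
  have hUb : U ≤ (n:ℝ)*(1/(4*s)) := by
    rw [hUdef]
    calc ∑ i ∈ Finset.range n, Kf (Mu i) ≤ ∑ _i ∈ Finset.range n, 1/(4*s) :=
          Finset.sum_le_sum (fun i _ => hKle _)
      _ = (n:ℝ)*(1/(4*s)) := by rw [Finset.sum_const, Finset.card_range, nsmul_eq_mul]
  have hLhκ : L*h/(4*s) ≤ L*κ/(4*s) := by
    rw [div_le_div_iff₀ h4s h4s]
    have t := mul_le_mul_of_nonneg_left hhκ (mul_nonneg hL.le h4s.le)
    nlinarith only [t]
  have hh2U : h^2*U ≤ ε₁ := by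
    calc h^2*U ≤ h^2*((n:ℝ)*(1/(4*s))) := mul_le_mul_of_nonneg_left hUb (sq_nonneg h)
      _ = L*h/(4*s) := by rw [← hnh]; ring
      _ ≤ L*κ/(4*s) := hLhκ
      _ ≤ s*ε₁/16 := e3
      _ ≤ ε₁ := by linarith only [hsε, hε₁]
  have hh2U0 : (0:ℝ) ≤ h^2*U := mul_nonneg (sq_nonneg h) hU0
  -- T bounds
  have hT0 : (0:ℝ) ≤ T := by
    rw [hTdef]
    exact Finset.sum_nonneg (fun i _ => mul_nonneg (mul_nonneg (hνnonneg _) (hKpos _)) hh.le)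
  have hTle : T ≤ M*L/(4*s) := by
    rw [hTdef]
    calc ∑ i ∈ Finset.range n, ν (Mu i) * Kf (Mu i) * h
        ≤ ∑ _i ∈ Finset.range n, M * (1/(4*s)) * h := by
          refine Finset.sum_le_sum (fun i _ => ?_)
          refine mul_le_mul_of_nonneg_right ?_ hh.le
          exact mul_le_mul (hνle _) (hKle _) (hKpos _) hM0.le
      _ = M*L/(4*s) := by
          rw [Finset.sum_const, Finset.card_range, nsmul_eq_mul, ← hnh]; ring
  -- P vs T + h² U
  have hκ1 : κ ≤ M := by
    have hup1 : 4*M*(L+1)^2*κ ≤ 1 := by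
      rw [hκeq]
      linarith only [hs2ε, hε₁1]
    have hlow : (1:ℝ) ≤ M*(L+1)^2 := by
      nlinarith only [hM1, hL, mul_nonneg (sub_nonneg.2 hM1) (sq_nonneg (L+1))]
    have t := mul_le_mul_of_nonneg_right (show (4:ℝ) ≤ 4*(M*(L+1)^2) by linarith only [hlow]) hκ.le
    linarith only [hup1, t, hκ.le, hM1]
  have hPW : P*W = T + h^2*U := by
    rw [hPdef, hTdef, hUdef, Finset.sum_mul, Finset.mul_sum, ← Finset.sum_add_distrib]
    refine Finset.sum_congr rfl (fun i _ => ?_)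
    field_simp
  have hPval : P = (T + h^2*U)/W := by
    rw [eq_div_iff hW0]
    exact hPW
  have hTU : T + h^2*U ≤ M*L/(2*s) := by
    have h9a : h^2*U ≤ L*κ/(4*s) := by
      calc h^2*U ≤ h^2*((n:ℝ)*(1/(4*s))) := mul_le_mul_of_nonneg_left hUb (sq_nonneg h)
        _ = L*h/(4*s) := by rw [← hnh]; ring
        _ ≤ L*κ/(4*s) := hLhκ
    have h9b : L*κ/(4*s) ≤ M*L/(4*s) := by
      rw [div_le_div_iff₀ h4s h4s]
      have t := mul_le_mul_of_nonneg_left hκ1 (mul_nonneg hL.le h4s.le)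
      nlinarith only [t]
    have h9 := h9a.trans h9b
    have h10 : M*L/(4*s) + M*L/(4*s) = M*L/(2*s) := by
      rw [← add_div]
      rw [div_eq_div_iff (by linarith only [hs] : (0:ℝ) < 4*s).ne' (by linarith only [hs] : (0:ℝ) < 2*s).ne']
      ring
    linarith only [hTle, h9, h10]
  have hPT : |P - (T + h^2*U)| ≤ ε₁ := by
    have heq2 : P - (T + h^2*U) = (T + h^2*U)*(1-W)/W := by
      rw [hPval, mul_sub, mul_one, sub_div, mul_div_cancel_right₀ _ hW0]
    rw [heq2, abs_div, abs_of_pos hWpos, abs_mul,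
        abs_of_nonneg (by linarith only [hT0, hh2U0] : (0:ℝ) ≤ T + h^2*U)]
    rw [div_le_iff₀ hWpos]
    have habs1 : |1 - W| ≤ 2*(L*κ) := by rw [abs_sub_comm]; exact hW1κ
    have hMLs : (0:ℝ) ≤ M*L/(2*s) := div_nonneg (mul_nonneg hM0.le hL.le) (by linarith only [hs])
    calc (T + h^2*U) * |1 - W| ≤ (M*L/(2*s)) * (2*(L*κ)) :=
          mul_le_mul hTU habs1 (abs_nonneg _) hMLs
      _ = (M*L^2*κ)/s := by ring
      _ ≤ (s^2*ε₁/4)/s := by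
          rw [div_le_div_iff₀ hs hs]
          have t := mul_le_mul_of_nonneg_right hb4 hs.le
          linarith only [t]
      _ = s*ε₁/4 := by
          rw [div_div, div_eq_div_iff (by linarith only [hs] : (0:ℝ) < 4*s).ne' (by norm_num : ((4:ℝ)) ≠ 0)]
          ring
      _ ≤ ε₁*W := by
          have t := mul_le_mul_of_nonneg_left hWhalf hε₁.le
          linarith only [hsε, t, hε₁.le]
  -- assemble
  have hTν : |T - ν x| ≤ 5*ε₁ := by
    have t1 := abs_sub_le T (∫ y in A..B, ν y * Kf y) (ν x)
    have t2 := abs_sub_le (∫ y in A..B, ν y * Kf y)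
      (ν x * (sigmoid ((x-A)/s) - sigmoid ((x-B)/s))) (ν x)
    linarith only [t1, t2, hE1, hconv, hbE3]
  have hPν : |P - ν x| ≤ 7*ε₁ := by
    have t1 := abs_sub_le P (T + h^2*U) (ν x)
    have t2 := abs_sub_le (T + h^2*U) T (ν x)
    have t3 : |T + h^2*U - T| = h^2*U := by
      rw [show T + h^2*U - T = h^2*U from by ring, abs_of_nonneg hh2U0]
    linarith only [t1, t2, t3, hPT, hh2U, hTν]
  have hfin := abs_sub_le (P/D) P (ν x)
  have hlast : |P/D - ν x| ≤ 8*ε₁ := by linarith only [hfin, hE9, hPν]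
  linarith only [hlast, hε₁ε, hε₁]
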